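/- arXiv:2010.06239 — 2 statements merged into one kernel-verified Lean document; each statement's English description precedes it below -/
import Mathlib

section
/- Let J be a block lower-triangular matrix of size (m+n)×(m+n) of the form J = [[J11, 0],[J21, J22]], where J11 = F_C(X)·I_m + F_C'(X)·C·1_m^T for C ∈ ℝ^m with 1_m^T C = X, and J22 = F_S(X)·I_n. Then the set of eigenvalues of J is contained in {F_C(X), F_C(X) + F_C'(X)·X, F_S(X)}; in particular all eigenvalues of J are real. -/
theorem stmt2 (m n : ℕ) (fC fC' fS X : ℝ) (C : Fin m → ℝ) (hC : ∑ i, C i = X)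
    (J21 : Matrix (Fin n) (Fin m) ℝ)
    (J : Matrix (Fin m ⊕ Fin n) (Fin m ⊕ Fin n) ℝ)
    (hJ : J = Matrix.fromBlocks
      (fC • (1 : Matrix (Fin m) (Fin m) ℝ) + fC' • Matrix.vecMulVec C (fun _ => (1 : ℝ)))
      0 J21 (fS • (1 : Matrix (Fin n) (Fin n) ℝ))) :
    spectrum ℝ J ⊆ {fC, fC + fC' * X, fS} := by
  intro μ hμ
  simp only [Set.mem_insert_iff, Set.mem_singleton_iff]
  by_contra hne
  push_neg at hne
  obtain ⟨h1, h2, h3⟩ := hne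
  rw [spectrum.mem_iff] at hμ
  apply hμ
  rw [Matrix.isUnit_iff_isUnit_det, isUnit_iff_ne_zero]
  have ha : μ - fC ≠ 0 := sub_ne_zero.mpr h1
  have hkey : (μ • (1 : Matrix (Fin m) (Fin m) ℝ) -
      (fC • 1 + fC' • Matrix.vecMulVec C (fun _ => (1 : ℝ)))) =
      (μ - fC) • (1 + Matrix.replicateCol Unit ((-(fC'/(μ-fC))) • C) * Matrix.replicateRow Unit (fun _ => (1:ℝ))) := by
    rw [← Matrix.vecMulVec_eq]
    ext i j
    by_cases hij : i = j <;>
      simp [Matrix.one_apply, Matrix.vecMulVec_apply, hij] <;> field_simp <;> ring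
  rw [hJ, Algebra.algebraMap_eq_smul_one, ← Matrix.fromBlocks_one, Matrix.fromBlocks_smul,
    sub_eq_add_neg, Matrix.fromBlocks_neg, Matrix.fromBlocks_add]
  simp only [neg_zero, add_zero, ← sub_eq_add_neg, smul_zero, sub_zero]
  rw [Matrix.det_fromBlocks_zero₁₂, hkey, Matrix.det_smul, Matrix.det_one_add_replicateCol_mul_replicateRow,
    ← sub_smul, Matrix.det_smul, Matrix.det_one, mul_one]
  have hd : dotProduct (fun _ => (1:ℝ)) ((-(fC'/(μ-fC))) • C) = -(fC'/(μ-fC)) * X := by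
    simp only [dotProduct, Pi.smul_apply, smul_eq_mul, one_mul, ← Finset.mul_sum, hC]
  rw [hd]
  have h2' : 1 + -(fC'/(μ-fC)) * X ≠ 0 := by
    intro h
    apply h2
    field_simp at h
    linarith
  exact mul_ne_zero (mul_ne_zero (pow_ne_zero _ ha) h2')
    (pow_ne_zero _ (sub_ne_zero.mpr h3))
end

section
/- Let q ∈ ℝ, γ ∈ {0,1}, ρ_X > 0, and let v_hs : [0, X_max] → [0,∞) be differentiable and nonincreasing with v_hs(X_max) = 0, where 0 < X_max < ρ_X. Define f(X) := X·v_hs(X), λ₁(X) := q + γ·f'(X) and λ₂(X) := q − γ·f(X)/(ρ_X − X). Then λ₁(0) ≥ λ₂(0) and λ₁(X_max) ≤ λ₂(X_max); consequently, if γ = 1 and v_hs(0) > 0, by continuity there exists X* ∈ (0, X_max] with λ₁(X*) = λ₂(X*). -/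
/-!
The flux `f X = X * vhs X` vanishes at `0` and at `Xmax`, so `λ₂ = q` at both ends, while
`λ₁ - q = γ f'` equals `γ vhs 0 ≥ 0` at `0` and `γ Xmax vhs' Xmax ≤ 0` at `Xmax` (an antitone
function has nonpositive derivative). When `γ = 1` and `vhs 0 > 0` the first inequality is strict,
and the intermediate value theorem applied to `λ₁ - λ₂` on `[0, Xmax]` yields a crossing away from `0`.
-/

open Set

theorem deriv_id_mul {𝕜 : Type*} [NontriviallyNormedField 𝕜] {v : 𝕜 → 𝕜} {x : 𝕜}
    (hv : DifferentiableAt 𝕜 v x) : deriv (fun y => y * v y) x = v x + x * deriv v x := by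
  simpa using ((hasDerivAt_id' x).fun_mul hv.hasDerivAt).deriv

theorem AntitoneOn.deriv_nonpos_of_mem_Icc {v : ℝ → ℝ} {a b x : ℝ} (hab : a < b)
    (hv : AntitoneOn v (Icc a b)) (hx : x ∈ Icc a b) (hd : DifferentiableAt ℝ v x) :
    deriv v x ≤ 0 := by
  rw [← hd.derivWithin (uniqueDiffOn_Icc hab x hx)]
  exact hv.derivWithin_nonpos

theorem exists_mem_Ioc_eq_of_lt_of_le {φ ψ : ℝ → ℝ} {a b : ℝ} (hab : a ≤ b)
    (hφ : ContinuousOn φ (Icc a b)) (hψ : ContinuousOn ψ (Icc a b))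
    (ha : ψ a < φ a) (hb : φ b ≤ ψ b) : ∃ x ∈ Ioc a b, φ x = ψ x := by
  obtain ⟨x, hx, hx0⟩ := intermediate_value_Icc' hab (hφ.sub hψ)
    (show (0 : ℝ) ∈ Icc (φ b - ψ b) (φ a - ψ a) from ⟨by linarith, by linarith⟩)
  have hxeq : φ x = ψ x := sub_eq_zero.1 hx0
  have hxa : x ≠ a := by rintro rfl; linarith
  exact ⟨x, ⟨lt_of_le_of_ne hx.1 hxa.symm, hx.2⟩, hxeq⟩

theorem stmt3_general (q γ ρX Xmax : ℝ) (hγ : γ = 0 ∨ γ = 1) (hXmax : 0 < Xmax) (hXρ : Xmax < ρX)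
    (vhs : ℝ → ℝ) (hsm : ContDiff ℝ 1 vhs)
    (hanti : AntitoneOn vhs (Set.Icc 0 Xmax))
    (hend : vhs Xmax = 0) :
    let f := fun X => X * vhs X
    let lam1 := fun X => q + γ * deriv f X
    let lam2 := fun X => q - γ * f X / (ρX - X)
    lam2 0 ≤ lam1 0 ∧ lam1 Xmax ≤ lam2 Xmax ∧
      (γ = 1 → 0 < vhs 0 → ∃ Xs ∈ Set.Ioc 0 Xmax, lam1 Xs = lam2 Xs) := by
  intro f lam1 lam2
  have hv : Differentiable ℝ vhs := hsm.differentiable one_ne_zero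
  have hγ0 : 0 ≤ γ := by rcases hγ with rfl | rfl <;> norm_num
  have hv0 : 0 ≤ vhs 0 :=
    hend ▸ hanti (left_mem_Icc.2 hXmax.le) (right_mem_Icc.2 hXmax.le) hXmax.le
  have hv'Xmax : deriv vhs Xmax ≤ 0 :=
    hanti.deriv_nonpos_of_mem_Icc hXmax (right_mem_Icc.2 hXmax.le) (hv Xmax)
  have lam1_zero : lam1 0 = q + γ * vhs 0 := by simp [lam1, f, deriv_id_mul (hv 0)]
  have lam1_Xmax : lam1 Xmax = q + γ * (Xmax * deriv vhs Xmax) := by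
    simp [lam1, f, deriv_id_mul (hv Xmax), hend]
  have lam2_zero : lam2 0 = q := by simp [lam2, f]
  have lam2_Xmax : lam2 Xmax = q := by simp [lam2, f, hend]
  have hleft : lam2 0 ≤ lam1 0 := by
    rw [lam1_zero, lam2_zero]
    exact le_add_of_nonneg_right (mul_nonneg hγ0 hv0)
  have hright : lam1 Xmax ≤ lam2 Xmax := by
    rw [lam1_Xmax, lam2_Xmax]
    exact add_le_of_nonpos_right
      (mul_nonpos_of_nonneg_of_nonpos hγ0 (mul_nonpos_of_nonneg_of_nonpos hXmax.le hv'Xmax))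
  refine ⟨hleft, hright, fun hγ1 hpos => exists_mem_Ioc_eq_of_lt_of_le hXmax.le ?_ ?_ ?_ hright⟩
  · exact (continuous_const.add (continuous_const.mul
      ((contDiff_id.mul hsm).continuous_deriv le_rfl))).continuousOn
  · refine continuousOn_const.sub (ContinuousOn.div
      (continuousOn_const.mul (continuous_id.mul hv.continuous).continuousOn) (by fun_prop) ?_)
    intro x hx
    linarith [hx.2]
  · rw [lam1_zero, lam2_zero, hγ1, one_mul]
    linarith

theorem stmt3 (q γ ρX Xmax : ℝ) (hγ : γ = 0 ∨ γ = 1) (hXmax : 0 < Xmax) (hXρ : Xmax < ρX)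
    (vhs : ℝ → ℝ) (hsm : ContDiff ℝ 1 vhs)
    (hnonneg : ∀ x ∈ Set.Icc 0 Xmax, 0 ≤ vhs x)
    (hanti : AntitoneOn vhs (Set.Icc 0 Xmax))
    (hend : vhs Xmax = 0) :
    let f := fun X => X * vhs X
    let lam1 := fun X => q + γ * deriv f X
    let lam2 := fun X => q - γ * f X / (ρX - X)
    lam2 0 ≤ lam1 0 ∧ lam1 Xmax ≤ lam2 Xmax ∧
      (γ = 1 → 0 < vhs 0 → ∃ Xs ∈ Set.Ioc 0 Xmax, lam1 Xs = lam2 Xs) :=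
  stmt3_general q γ ρX Xmax hγ hXmax hXρ vhs hsm hanti hend
end
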